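/- For each β ∈ [0, β_c(T×Z)) there exists a continuous function γ̃ : (0,1)×ℝ → (0,∞) such that for every finite Λ ⊂ ℤ³, every increasing event A ⊂ {−1,+1}^Λ and every (p,h) ∈ (0,1)×ℝ: ∂μ_{Λ,p,h}(A)/∂h ≥ γ̃(p,h) · ∂μ_{Λ,p,h}(A)/∂p. -/

import Mathlib

open scoped BigOperators
open Classical Filter MeasureTheory

namespace Ising

/-- Vertices of the lattice `T×Z` are the points of `ℤ³`. -/
abbrev V : Type := ℤ × ℤ × ℤ

/-- The eight difference vectors defining adjacency in `T×Z`: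
`±(1,0,0), ±(0,1,0), ±(1,1,0), ±(0,0,1)`. -/
def dirs : Finset V :=
  {(1,0,0), (-1,0,0), (0,1,0), (0,-1,0), (1,1,0), (-1,-1,0), (0,0,1), (0,0,-1)}

/-- Adjacency in the lattice `T×Z`. -/
def adj (x y : V) : Prop := y - x ∈ dirs

/-- The neighbours of a vertex in `T×Z`. -/
def nbrs (x : V) : Finset V := dirs.image (fun d => x + d)

/-- Euclidean distance on `ℤ³`. -/
noncomputable def edist (x y : V) : ℝ :=
  Real.sqrt ((((x.1 - y.1) ^ 2 + (x.2.1 - y.2.1) ^ 2 + (x.2.2 - y.2.2) ^ 2 : ℤ) : ℝ))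

/-- Spin configurations on all of `ℤ³`; `true` codes `+1` and `false` codes `-1`. -/
abbrev Config : Type := V → Bool

/-- The `±1`-valued spin at a vertex. -/
noncomputable def spin (σ : Config) (x : V) : ℝ := if σ x then 1 else -1

/-- Extension of a configuration on a finite `Λ` by `-1` (i.e. `false`) outside `Λ`. -/
noncomputable def extend (Λ : Finset V) (σ : Λ → Bool) : Config :=
  fun v => if h : v ∈ Λ then σ ⟨v, h⟩ else false

/-- (Negative of the) Hamiltonian on `Λ` with inverse temperature `β`, boundary
condition `η : V → ℤ` (only values outside `Λ` matter) and field `J : V → ℝ`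
(only values on `Λ` matter): the edge sum is over ordered pairs, divided by two. -/
noncomputable def energy (Λ : Finset V) (β : ℝ) (η : V → ℤ) (J : V → ℝ) (σ : Config) : ℝ :=
  β * ((∑ x ∈ Λ, ∑ y ∈ Λ, if adj x y then spin σ x * spin σ y else 0) / 2)
    + β * (∑ x ∈ Λ, ∑ y ∈ nbrs x, if y ∉ Λ then spin σ x * ((η y : ℤ) : ℝ) else 0)
    + ∑ x ∈ Λ, J x * spin σ x

/-- Boltzmann weight. -/
noncomputable def weight (Λ : Finset V) (β : ℝ) (η : V → ℤ) (J : V → ℝ) (σ : Config) : ℝ :=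
  Real.exp (energy Λ β η J σ)

/-- The partition function. -/
noncomputable def Zpart (Λ : Finset V) (β : ℝ) (η : V → ℤ) (J : V → ℝ) : ℝ :=
  ∑ σ : Λ → Bool, weight Λ β η J (extend Λ σ)

/-- The finite-volume Ising probability of an event `A`. -/
noncomputable def prob (Λ : Finset V) (β : ℝ) (η : V → ℤ) (J : V → ℝ) (A : Set Config) : ℝ :=
  (∑ σ : Λ → Bool, if extend Λ σ ∈ A then weight Λ β η J (extend Λ σ) else 0) / Zpart Λ β η J

/-- Finite-volume expectation `⟨f⟩`. -/
noncomputable def expec (Λ : Finset V) (β : ℝ) (η : V → ℤ) (J : V → ℝ) (f : Config → ℝ) : ℝ :=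
  (∑ σ : Λ → Bool, f (extend Λ σ) * weight Λ β η J (extend Λ σ)) / Zpart Λ β η J

/-- Finite-volume covariance `⟨f;g⟩ = ⟨fg⟩ - ⟨f⟩⟨g⟩`. -/
noncomputable def covar (Λ : Finset V) (β : ℝ) (η : V → ℤ) (J : V → ℝ) (f g : Config → ℝ) : ℝ :=
  expec Λ β η J (fun σ => f σ * g σ) - expec Λ β η J f * expec Λ β η J g

/-- Conditional probability `P(A | B)`. -/
noncomputable def condProb (Λ : Finset V) (β : ℝ) (η : V → ℤ) (J : V → ℝ)
    (A B : Set Config) : ℝ :=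
  prob Λ β η J (A ∩ B) / prob Λ β η J B

/-- Indicator function of an event. -/
noncomputable def ind (A : Set Config) : Config → ℝ := fun σ => if σ ∈ A then 1 else 0

/-- The box `B_n = [-n,n]³ ∩ ℤ³`. -/
noncomputable def box (n : ℕ) : Finset V :=
  Finset.Icc (-(n : ℤ)) (n : ℤ) ×ˢ (Finset.Icc (-(n : ℤ)) (n : ℤ) ×ˢ Finset.Icc (-(n : ℤ)) (n : ℤ))

/-- The translated box `B_m(x) = x + B_m`. -/
noncomputable def boxAt (m : ℕ) (x : V) : Finset V := (box m).image (fun v => x + v)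

/-- The (inner) boundary `∂Λ` of a set of vertices. -/
noncomputable def bdry (Λ : Finset V) : Finset V := Λ.filter (fun x => ∃ y ∈ nbrs x, y ∉ Λ)

/-- An event is increasing if it is preserved by raising spins. -/
def Increasing (A : Set Config) : Prop :=
  ∀ σ τ : Config, σ ∈ A → (∀ v, σ v ≤ τ v) → τ ∈ A

/-- `A ∈ F_Δ`: the event `A` is determined by the spins in `Δ`. -/
def DependsOn (A : Set Config) (Δ : Set V) : Prop :=
  ∀ σ τ : Config, (∀ v ∈ Δ, σ v = τ v) → (σ ∈ A ↔ τ ∈ A)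

/-- The event `{A occurs on Δ}`. -/
def occursOn (A : Set Config) (Δ : Set V) : Set Config :=
  {σ | ∀ τ : Config, (∀ v ∈ Δ, τ v = σ v) → τ ∈ A}

/-- `σ^{Δ+}` (for `b = true`) resp. `σ^{Δ-}` (for `b = false`). -/
noncomputable def forceOn (σ : Config) (Δ : Set V) (b : Bool) : Config :=
  fun v => if v ∈ Δ then b else σ v

/-- The event `{Δ is pivotal for A}`. -/
def pivotal (A : Set Config) (Δ : Set V) : Set Config :=
  {σ | forceOn σ Δ true ∈ A ∧ forceOn σ Δ false ∉ A}

/-- The event `{x is +pivotal for A}`. -/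
def plusPivotal (A : Set Config) (x : V) : Set Config :=
  pivotal A {x} ∩ {σ | σ x = true}

/-- The slab `S_k = ℤ² × {0,…,k}`. -/
def slab (k : ℕ) : Set V := {x | 0 ≤ x.2.2 ∧ x.2.2 ≤ (k : ℤ)}

/-- The event `{∃ LR +crossing in B_n ∩ S_k}`: a path of `+` spins inside `B_n ∩ S_k`
meeting both hyperplanes `{x(1) = -n}` and `{x(1) = n}`. -/
def crossing (n k : ℕ) : Set Config :=
  {σ | ∃ l : List V, l.Chain' adj ∧ (∀ v ∈ l, v ∈ box n ∧ v ∈ slab k ∧ σ v = true) ∧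
      (∃ u ∈ l, u.1 = -(n : ℤ)) ∧ (∃ u ∈ l, u.1 = (n : ℤ))}

/-- `Λ_{(1)}`: the vertices of `Λ` with third coordinate `1`. -/
def lamOne (Λ : Finset V) : Finset V := Λ.filter (fun x => x.2.2 = 1)

/-- The Bernoulli(p) weight `P_p(ω) = p^{|ω⁻¹(1)|}(1-p)^{|ω⁻¹(0)|}`. -/
noncomputable def bern (p : ℝ) (Δ : Finset V) (ω : Δ → Bool) : ℝ :=
  ∏ y : Δ, (if ω y then p else 1 - p)

/-- `ω⁻¹(1)` as a set of vertices. -/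
def openSet (Δ : Finset V) (ω : Δ → Bool) : Set V :=
  {v | ∃ h : v ∈ Δ, ω ⟨v, h⟩ = true}

/-- The measure `μ_{Λ,p,h}` of an event `A` (with free boundary conditions,
inverse temperature `β`, vertex-percolation parameter `p` and field `h`). -/
noncomputable def mu (Λ : Finset V) (β p h : ℝ) (A : Set Config) : ℝ :=
  ∑ ω : lamOne Λ → Bool,
    bern p (lamOne Λ) ω *
      prob Λ β (fun _ => 0) (fun _ => h) (occursOn A (slab 0 ∪ openSet (lamOne Λ) ω))

/-- The field equal to `h + t` on `∂B_m(x) ∩ Λ` and to `h` elsewhere. -/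
noncomputable def gfield (Λ : Finset V) (m : ℕ) (x : V) (h t : ℝ) : V → ℝ :=
  fun y => if y ∈ bdry (boxAt m x) ∩ Λ then h + t else h

/-- Characterization of the regime `β ∈ [0, β_c(T×Z))`: exponential decay of the
two-point function at zero field, uniformly in the volume. -/
def expDecay (β : ℝ) : Prop :=
  ∃ C > (0 : ℝ), ∃ c > (0 : ℝ), ∀ Λ : Finset V, ∀ x ∈ Λ, ∀ y ∈ Λ,
    expec Λ β (fun _ => 0) (fun _ => 0) (fun σ => spin σ x * spin σ y)
      ≤ C * Real.exp (-c * edist x y)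

/-- There is a path of spins `b` (in `T×Z`) from `x` to `y` in the configuration `σ`. -/
def pathIn (σ : Config) (b : Bool) (x y : V) : Prop :=
  ∃ l : List V, l.Chain' adj ∧ l.head? = some x ∧ l.getLast? = some y ∧ ∀ v ∈ l, σ v = b

/-- The `b`-cluster of a vertex. -/
def cluster (σ : Config) (b : Bool) (x : V) : Set V := {y | pathIn σ b x y}

/-- The set `{x : σ_x = b}` has exactly one infinite connected component in `T×Z`. -/
def uniqueInfCluster (σ : Config) (b : Bool) : Prop :=
  ∃ x : V, σ x = b ∧ (cluster σ b x).Infinite ∧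
    ∀ y : V, σ y = b → (cluster σ b y).Infinite → cluster σ b y = cluster σ b x

/-- The event `H(x,ω)` resp. `H(y,ω^{(y)})` at the level of open sets:
`{(crossing n 1) occurs on S_0 ∪ S ∪ {x}}`. -/
def Hx (n : ℕ) (S : Set V) (x : V) : Set Config :=
  occursOn (crossing n 1) (slab 0 ∪ S ∪ {x})


section Generic
variable {ι : Type*} [Fintype ι] [DecidableEq ι]

def cIx (x : ι) (σ : ι → Bool) : ℝ := if σ x then 1 else 0
def cSx (x : ι) (σ : ι → Bool) : ℝ := if σ x then 1 else -1

omit [Fintype ι] [DecidableEq ι] in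
lemma cIx_nonneg (x : ι) (σ : ι → Bool) : 0 ≤ cIx x σ := by unfold cIx; split <;> norm_num

omit [Fintype ι] [DecidableEq ι] in
lemma cIx_mono (x : ι) : Monotone (cIx x) := by
  intro σ τ hle
  unfold cIx
  cases hσ : σ x
  · cases hτ : τ x <;> norm_num
  · have h := hle x
    rw [hσ] at h
    have hτ : τ x = true := top_unique h
    simp [hσ, hτ]

lemma gen_fkg (W F G : (ι → Bool) → ℝ) (hW0 : ∀ σ, 0 ≤ W σ)
    (hlog : ∀ σ τ, W σ * W τ ≤ W (σ ⊓ τ) * W (σ ⊔ τ))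
    (hF0 : ∀ σ, 0 ≤ F σ) (hG0 : ∀ σ, 0 ≤ G σ)
    (hF : Monotone F) (hG : Monotone G) :
    (∑ σ, W σ * F σ) * (∑ σ, W σ * G σ) ≤ (∑ σ, W σ) * (∑ σ, W σ * (F σ * G σ)) :=
  fkg F G W (fun σ => hW0 σ) (fun σ => hF0 σ) (fun σ => hG0 σ) hF hG hlog

lemma gen_covpos (W F : (ι → Bool) → ℝ) (x : ι) (hW0 : ∀ σ, 0 ≤ W σ)
    (hlog : ∀ σ τ, W σ * W τ ≤ W (σ ⊓ τ) * W (σ ⊔ τ))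
    (hF0 : ∀ σ, 0 ≤ F σ) (hF : Monotone F) :
    0 ≤ (∑ σ, W σ * (F σ * cSx x σ)) * (∑ σ, W σ)
        - (∑ σ, W σ * F σ) * (∑ σ, W σ * cSx x σ) := by
  have key := gen_fkg W F (cIx x) hW0 hlog hF0 (cIx_nonneg x) hF (cIx_mono x)
  have e1 : (∑ σ, W σ * (F σ * cSx x σ))
      = ∑ σ, (2 * (W σ * (F σ * cIx x σ)) - W σ * F σ) := by
    refine Finset.sum_congr rfl fun σ _ => ?_
    unfold cSx cIx; cases σ x <;> simp <;> ring
  have e2 : (∑ σ, W σ * cSx x σ) = ∑ σ, (2 * (W σ * cIx x σ) - W σ) := by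
    refine Finset.sum_congr rfl fun σ _ => ?_
    unfold cSx cIx; cases σ x <;> simp <;> ring
  rw [e1, e2, Finset.sum_sub_distrib, Finset.sum_sub_distrib, ← Finset.mul_sum, ← Finset.mul_sum]
  nlinarith [key]

lemma gen_flipsum_le (W : (ι → Bool) → ℝ) (x : ι) (R : ℝ)
    (hflip : ∀ σ, W (Function.update σ x true) ≤ R * W (Function.update σ x false)) :
    (∑ σ, W σ * cIx x σ) ≤ R * (∑ σ, (W σ - W σ * cIx x σ)) := by
  have hT : Function.Involutive (fun σ : ι → Bool => Function.update σ x (!(σ x))) := by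
    intro σ
    funext i
    by_cases hi : i = x
    · subst hi; simp
    · simp [Function.update_of_ne hi]
  have hre : (∑ σ, W σ * cIx x σ)
      = ∑ σ, W (Function.update σ x (!(σ x))) * cIx x (Function.update σ x (!(σ x))) :=
    (Fintype.sum_bijective _ hT.bijective _ _ (fun σ => rfl)).symm
  rw [hre, Finset.mul_sum]
  refine Finset.sum_le_sum fun σ _ => ?_
  cases hσx : σ x
  · simp only [Bool.not_false]
    have h2 : Function.update σ x false = σ := by rw [← hσx]; exact Function.update_eq_self x σ
    have h3 : cIx x (Function.update σ x true) = 1 := by simp [cIx]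
    rw [h3, mul_one]
    have := hflip σ
    rw [h2] at this
    simpa [cIx, hσx] using this
  · simp only [Bool.not_true]
    have h3 : cIx x (Function.update σ x false) = 0 := by
      have h2 : Function.update σ x false x = false := by simp
      simp [cIx, h2]
    rw [h3, mul_zero]
    have : cIx x σ = 1 := by simp [cIx, hσx]
    rw [this, mul_one, sub_self, mul_zero]

lemma gen_core (W F : (ι → Bool) → ℝ) (x : ι) (R : ℝ) (hR : 0 ≤ R)
    (hW0 : ∀ σ, 0 ≤ W σ)
    (hlog : ∀ σ τ, W σ * W τ ≤ W (σ ⊓ τ) * W (σ ⊔ τ))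
    (hF0 : ∀ σ, 0 ≤ F σ) (hF : Monotone F)
    (hflip : ∀ σ, W (Function.update σ x true) ≤ R * W (Function.update σ x false)) :
    2 * ((∑ σ, W σ * F σ) - (∑ σ, W σ * F (Function.update σ x false))) * (∑ σ, W σ)
      ≤ (1 + R) * ((∑ σ, W σ * (F σ * cSx x σ)) * (∑ σ, W σ)
          - (∑ σ, W σ * F σ) * (∑ σ, W σ * cSx x σ)) := by
  set G : (ι → Bool) → ℝ := fun σ => F (Function.update σ x false) with hGdef
  have hupdle : ∀ σ : ι → Bool, Function.update σ x false ≤ σ := by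
    intro σ i
    by_cases hi : i = x
    · subst hi; simp
    · rw [Function.update_of_ne hi]
  have hupdmono : Monotone (fun σ : ι → Bool => Function.update σ x false) := by
    intro σ τ hle i
    dsimp only
    by_cases hi : i = x
    · subst hi; simp
    · rw [Function.update_of_ne hi, Function.update_of_ne hi]; exact hle i
  have hGmono : Monotone G := hF.comp hupdmono
  have hG0 : ∀ σ, 0 ≤ G σ := fun σ => hF0 _
  have hGF : ∀ σ, G σ ≤ F σ := fun σ => hF (hupdle σ)
  -- abbreviations
  set a := ∑ σ, W σ * (F σ * cIx x σ) with ha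
  set b := ∑ σ, W σ * F σ with hb
  set c := ∑ σ, W σ with hc
  set d := ∑ σ, W σ * cIx x σ with hd
  set e := ∑ σ, W σ * (G σ * cIx x σ) with he
  set g := ∑ σ, W σ * G σ with hg
  -- pointwise: on configs with σ x = false, F = G
  have f1 : b - g = a - e := by
    rw [hb, hg, ha, he, ← Finset.sum_sub_distrib, ← Finset.sum_sub_distrib]
    refine Finset.sum_congr rfl fun σ _ => ?_
    cases hσx : σ x
    · have h2 : Function.update σ x false = σ := by rw [← hσx]; exact Function.update_eq_self x σ
      simp [hGdef, h2, cIx, hσx]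
    · simp [cIx, hσx]
  have f2 : g * d ≤ c * e := gen_fkg W G (cIx x) hW0 hlog hG0 (cIx_nonneg x) hGmono (cIx_mono x)
  have f3 : e ≤ a := by
    rw [ha, he]
    refine Finset.sum_le_sum fun σ _ => ?_
    exact mul_le_mul_of_nonneg_left
      (mul_le_mul_of_nonneg_right (hGF σ) (cIx_nonneg x σ)) (hW0 σ)
  have f4 : c ≤ (1 + R) * (c - d) := by
    have h5 := gen_flipsum_le W x R hflip
    rw [Finset.sum_sub_distrib] at h5
    have h6 : 0 ≤ c - d := by
      rw [hc, hd, ← Finset.sum_sub_distrib]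
      refine Finset.sum_nonneg fun σ _ => ?_
      cases hσx : σ x <;> simp [cIx, hσx, hW0 σ]
    nlinarith [h5]
  -- rewrite RHS in terms of a b c d
  have e1 : (∑ σ, W σ * (F σ * cSx x σ)) = 2 * a - b := by
    rw [ha, hb, Finset.mul_sum, ← Finset.sum_sub_distrib]
    refine Finset.sum_congr rfl fun σ _ => ?_
    unfold cSx cIx; cases σ x <;> simp <;> ring
  have e2 : (∑ σ, W σ * cSx x σ) = 2 * d - c := by
    rw [hd, hc, Finset.mul_sum, ← Finset.sum_sub_distrib]
    refine Finset.sum_congr rfl fun σ _ => ?_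
    unfold cSx cIx; cases σ x <;> simp <;> ring
  rw [e1, e2]
  have hbg : b = g + (a - e) := by linarith [f1]
  have key : (2 * a - b) * c - b * (2 * d - c) = 2 * ((a - e) * (c - d) + (c * e - g * d)) := by
    rw [hbg]; ring
  rw [f1, key]
  have h7 : (0:ℝ) ≤ a - e := by linarith
  have h8 : (0:ℝ) ≤ c * e - g * d := by linarith
  have h9 : 2 * (a - e) * c ≤ 2 * ((a - e) * ((1 + R) * (c - d))) := by
    nlinarith [mul_le_mul_of_nonneg_left f4 h7]
  have h10 : (0:ℝ) ≤ (1 + R) * (c * e - g * d) := mul_nonneg (by linarith) h8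
  nlinarith [h9, h10]
end Generic


open Finset

-- ### event lemmas

lemma occursOn_increasing {A : Set Config} (hA : Increasing A) (Δ : Set V) :
    Increasing (occursOn A Δ) := by
  intro σ τ hσ hle
  intro ρ hρ
  have hρ' : (fun v => if v ∈ Δ then σ v else ρ v) ∈ A :=
    hσ _ (fun v hv => if_pos hv)
  refine hA _ ρ hρ' fun v => ?_
  by_cases hv : v ∈ Δ
  · simp only [if_pos hv]
    rw [hρ v hv]
    exact hle v
  · simp only [if_neg hv]
    exact le_rfl

lemma occursOn_mono {A : Set Config} {Δ Δ' : Set V} (hΔ : Δ ⊆ Δ') :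
    occursOn A Δ ⊆ occursOn A Δ' := by
  intro σ hσ τ hτ
  exact hσ τ (fun v hv => hτ v (hΔ hv))

lemma mem_occursOn_union_singleton {A : Set Config} (hA : Increasing A) {Δ : Set V} {x : V}
    (hx : x ∉ Δ) (ρ : Config) (hρ : ρ x = false) :
    ρ ∈ occursOn A (Δ ∪ {x}) ↔ ρ ∈ occursOn A Δ := by
  constructor
  · intro h1 τ hτ
    have hτ' : ∀ v ∈ Δ ∪ {x}, Function.update τ x false v = ρ v := by
      intro v hv
      rcases hv with hv | hv
      · have hvx : v ≠ x := fun hc => hx (hc ▸ hv)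
        rw [Function.update_of_ne hvx]
        exact hτ v hv
      · rcases hv with rfl
        rw [Function.update_self, hρ]
    have hmem := h1 _ hτ'
    refine hA _ τ hmem fun v => ?_
    by_cases hvx : v = x
    · subst hvx; rw [Function.update_self]; exact Bool.false_le _
    · rw [Function.update_of_ne hvx]
  · intro h1
    exact occursOn_mono Set.subset_union_left h1

lemma mem_occursOn_update {A : Set Config} {Δ : Set V} {x : V} (hx : x ∉ Δ)
    (ρ : Config) (b : Bool) :
    Function.update ρ x b ∈ occursOn A Δ ↔ ρ ∈ occursOn A Δ := by
  constructor <;> intro h1 τ hτ <;> refine h1 τ fun v hv => ?_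
  · have hvx : v ≠ x := fun hc => hx (hc ▸ hv)
    rw [hτ v hv, Function.update_of_ne hvx]
  · have hvx : v ≠ x := fun hc => hx (hc ▸ hv)
    rw [hτ v hv, Function.update_of_ne hvx]

lemma key_event {A : Set Config} (hA : Increasing A) {Δ : Set V} {x : V} (hx : x ∉ Δ)
    (ρ : Config) :
    Function.update ρ x false ∈ occursOn A (Δ ∪ {x}) ↔ ρ ∈ occursOn A Δ := by
  rw [mem_occursOn_union_singleton hA hx _ (Function.update_self x false ρ),
    mem_occursOn_update hx]

-- ### extend lemmas

lemma extend_update (Λ : Finset V) (σ : ↥Λ → Bool) (x : ↥Λ) (b : Bool) :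
    extend Λ (Function.update σ x b) = Function.update (extend Λ σ) ↑x b := by
  funext v
  by_cases hv : v ∈ Λ
  · by_cases hvx : v = ↑x
    · subst hvx
      have h1 : (⟨(x : V), hv⟩ : ↥Λ) = x := Subtype.ext rfl
      simp only [extend, dif_pos hv, h1, Function.update_self]
    · have h2 : (⟨v, hv⟩ : ↥Λ) ≠ x := fun hc => hvx (congrArg Subtype.val hc)
      simp only [extend, dif_pos hv, Function.update_of_ne h2, Function.update_of_ne hvx]
  · have hvx : v ≠ ↑x := fun hc => hv (hc ▸ x.2)
    simp only [extend, dif_neg hv, Function.update_of_ne hvx]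

lemma extend_mono {Λ : Finset V} {σ τ : ↥Λ → Bool} (hle : σ ≤ τ) (v : V) :
    extend Λ σ v ≤ extend Λ τ v := by
  by_cases hv : v ∈ Λ
  · simp only [extend, dif_pos hv]; exact hle _
  · simp only [extend, dif_neg hv]; exact le_rfl

lemma extend_sup {Λ : Finset V} (σ τ : ↥Λ → Bool) (v : V) :
    extend Λ (σ ⊔ τ) v = (extend Λ σ v || extend Λ τ v) := by
  by_cases hv : v ∈ Λ
  · simp only [extend, dif_pos hv]; rfl
  · simp only [extend, dif_neg hv]; rfl

lemma extend_inf {Λ : Finset V} (σ τ : ↥Λ → Bool) (v : V) :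
    extend Λ (σ ⊓ τ) v = (extend Λ σ v && extend Λ τ v) := by
  by_cases hv : v ∈ Λ
  · simp only [extend, dif_pos hv]; rfl
  · simp only [extend, dif_neg hv]; rfl

-- ### spin lemmas

lemma spin_eq (ρ : Config) (v : V) : spin ρ v = if ρ v then 1 else -1 := rfl

lemma spin_le_one (ρ : Config) (v : V) : spin ρ v ≤ 1 := by
  rw [spin_eq]; split <;> norm_num

lemma neg_one_le_spin (ρ : Config) (v : V) : -1 ≤ spin ρ v := by
  rw [spin_eq]; split <;> norm_num

lemma spin_mul_le_one (ρ ρ' : Config) (v w : V) : spin ρ v * spin ρ' w ≤ 1 := by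
  rw [spin_eq, spin_eq]; split <;> split <;> norm_num

lemma neg_one_le_spin_mul (ρ ρ' : Config) (v w : V) : -1 ≤ spin ρ v * spin ρ' w := by
  rw [spin_eq, spin_eq]; split <;> split <;> norm_num

-- ### adjacency counting

lemma dirs_card : dirs.card = 8 := by decide

lemma adj_irrefl (x : V) : ¬ adj x x := by
  intro h
  unfold adj at h
  have : (0 : V) ∈ dirs := by simpa using h
  exact absurd this (by decide)

lemma mem_nbrs_of_adj {z w : V} (h : adj z w) : w ∈ nbrs z := by
  unfold adj at h
  unfold nbrs
  exact Finset.mem_image.2 ⟨w - z, h, by ring⟩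

lemma mem_nbrs_of_adj' {z w : V} (h : adj w z) : w ∈ nbrs z := by
  unfold adj at h
  have h2 : w - z ∈ dirs := by
    have : -(z - w) ∈ dirs := by
      revert h
      have : ∀ d ∈ dirs, -d ∈ dirs := by decide
      intro h; exact this _ h
    simpa using this
  unfold nbrs
  exact Finset.mem_image.2 ⟨w - z, h2, by ring⟩

lemma nbrs_card_le (z : V) : (nbrs z).card ≤ 8 := by
  calc (nbrs z).card ≤ dirs.card := Finset.card_image_le
  _ = 8 := dirs_card

lemma adj_count_le (Λ : Finset V) (z : V) :
    (∑ w ∈ Λ, if adj z w then (2:ℝ) else 0) ≤ 16 := by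
  rw [← Finset.sum_filter]
  rw [Finset.sum_const]
  have hsub : Λ.filter (fun w => adj z w) ⊆ nbrs z := by
    intro w hw
    exact mem_nbrs_of_adj (Finset.mem_filter.1 hw).2
  have := (Finset.card_le_card hsub).trans (nbrs_card_le z)
  have h2 : ((Λ.filter (fun w => adj z w)).card : ℝ) ≤ 8 := by exact_mod_cast this
  rw [nsmul_eq_mul]
  nlinarith

lemma adj_count_le' (Λ : Finset V) (z : V) :
    (∑ w ∈ Λ, if adj w z then (2:ℝ) else 0) ≤ 16 := by
  rw [← Finset.sum_filter]
  rw [Finset.sum_const]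
  have hsub : Λ.filter (fun w => adj w z) ⊆ nbrs z := by
    intro w hw
    exact mem_nbrs_of_adj' (Finset.mem_filter.1 hw).2
  have := (Finset.card_le_card hsub).trans (nbrs_card_le z)
  have h2 : ((Λ.filter (fun w => adj w z)).card : ℝ) ≤ 8 := by exact_mod_cast this
  rw [nsmul_eq_mul]
  nlinarith



-- ### energy lemmas

lemma energy_eta_zero (Λ : Finset V) (β : ℝ) (J : V → ℝ) (ρ : Config) :
    energy Λ β (fun _ => 0) J ρ
      = β * ((∑ x ∈ Λ, ∑ y ∈ Λ, if adj x y then spin ρ x * spin ρ y else 0) / 2)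
        + ∑ x ∈ Λ, J x * spin ρ x := by
  simp [energy]

lemma energy_const_field (Λ : Finset V) (β h : ℝ) (ρ : Config) :
    energy Λ β (fun _ => 0) (fun _ => h) ρ
      = energy Λ β (fun _ => 0) (fun _ => (0:ℝ)) ρ + h * ∑ x ∈ Λ, spin ρ x := by
  rw [energy_eta_zero, energy_eta_zero]
  simp [Finset.mul_sum]

lemma bool_spin_add (a b : Bool) :
    (if (a && b) then (1:ℝ) else -1) + (if (a || b) then 1 else -1)
      = (if a then 1 else -1) + (if b then 1 else -1) := by
  cases a <;> cases b <;> norm_num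

lemma bool_spin_mul (a a' b b' : Bool) :
    (if a then (1:ℝ) else -1) * (if b then 1 else -1)
        + (if a' then 1 else -1) * (if b' then 1 else -1)
      ≤ (if (a && a') then (1:ℝ) else -1) * (if (b && b') then 1 else -1)
        + (if (a || a') then 1 else -1) * (if (b || b') then 1 else -1) := by
  cases a <;> cases a' <;> cases b <;> cases b' <;> norm_num

lemma spin_extend_sup {Λ : Finset V} (σ τ : ↥Λ → Bool) (v : V) :
    spin (extend Λ (σ ⊔ τ)) v = if (extend Λ σ v || extend Λ τ v) then 1 else -1 := by
  rw [spin_eq, extend_sup]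

lemma spin_extend_inf {Λ : Finset V} (σ τ : ↥Λ → Bool) (v : V) :
    spin (extend Λ (σ ⊓ τ)) v = if (extend Λ σ v && extend Λ τ v) then 1 else -1 := by
  rw [spin_eq, extend_inf]

lemma energy_supermod (Λ : Finset V) {β : ℝ} (hβ0 : 0 ≤ β) (J : V → ℝ) (σ τ : ↥Λ → Bool) :
    energy Λ β (fun _ => 0) J (extend Λ σ) + energy Λ β (fun _ => 0) J (extend Λ τ)
      ≤ energy Λ β (fun _ => 0) J (extend Λ (σ ⊓ τ))
        + energy Λ β (fun _ => 0) J (extend Λ (σ ⊔ τ)) := by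
  rw [energy_eta_zero, energy_eta_zero, energy_eta_zero, energy_eta_zero]
  have hJ : (∑ x ∈ Λ, J x * spin (extend Λ (σ ⊓ τ)) x)
      + (∑ x ∈ Λ, J x * spin (extend Λ (σ ⊔ τ)) x)
      = (∑ x ∈ Λ, J x * spin (extend Λ σ) x) + (∑ x ∈ Λ, J x * spin (extend Λ τ) x) := by
    rw [← Finset.sum_add_distrib, ← Finset.sum_add_distrib]
    refine Finset.sum_congr rfl fun v _ => ?_
    rw [spin_extend_inf, spin_extend_sup, spin_eq, spin_eq, ← mul_add, ← mul_add,
      bool_spin_add]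

  have hP : (∑ x ∈ Λ, ∑ y ∈ Λ, if adj x y then spin (extend Λ σ) x * spin (extend Λ σ) y else 0)
      + (∑ x ∈ Λ, ∑ y ∈ Λ, if adj x y then spin (extend Λ τ) x * spin (extend Λ τ) y else 0)
      ≤ (∑ x ∈ Λ, ∑ y ∈ Λ, if adj x y then spin (extend Λ (σ ⊓ τ)) x * spin (extend Λ (σ ⊓ τ)) y else 0)
      + (∑ x ∈ Λ, ∑ y ∈ Λ, if adj x y then spin (extend Λ (σ ⊔ τ)) x * spin (extend Λ (σ ⊔ τ)) y else 0) := by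
    rw [← Finset.sum_add_distrib, ← Finset.sum_add_distrib]
    refine Finset.sum_le_sum fun v _ => ?_
    rw [← Finset.sum_add_distrib, ← Finset.sum_add_distrib]
    refine Finset.sum_le_sum fun w _ => ?_
    by_cases hadj : adj v w
    · simp only [if_pos hadj]
      rw [spin_extend_inf, spin_extend_inf, spin_extend_sup, spin_extend_sup,
        spin_eq, spin_eq, spin_eq, spin_eq]
      exact bool_spin_mul _ _ _ _
    · simp [if_neg hadj]
  nlinarith [mul_le_mul_of_nonneg_left hP hβ0]

lemma spin_update (ρ : Config) (x : V) (b : Bool) (v : V) :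
    spin (Function.update ρ x b) v = if v = x then (if b then 1 else -1) else spin ρ v := by
  by_cases hv : v = x
  · subst hv; rw [spin_eq, Function.update_self, if_pos rfl]
  · rw [spin_eq, Function.update_of_ne hv, if_neg hv, spin_eq]

lemma energy_flip_le (Λ : Finset V) {β : ℝ} (hβ0 : 0 ≤ β) (h : ℝ) {x : V} (hx : x ∈ Λ)
    (ρ : Config) :
    energy Λ β (fun _ => 0) (fun _ => h) (Function.update ρ x true)
      ≤ energy Λ β (fun _ => 0) (fun _ => h) (Function.update ρ x false) + (2*h + 16*β) := by
  rw [energy_eta_zero, energy_eta_zero]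
  set ρ₁ := Function.update ρ x true with hρ₁
  set ρ₀ := Function.update ρ x false with hρ₀
  have hJ : (∑ v ∈ Λ, h * spin ρ₁ v) = (∑ v ∈ Λ, h * spin ρ₀ v) + 2*h := by
    have : (∑ v ∈ Λ, (h * spin ρ₁ v - h * spin ρ₀ v)) = ∑ v ∈ Λ, if v = x then 2*h else 0 := by
      refine Finset.sum_congr rfl fun v _ => ?_
      rw [hρ₁, hρ₀, spin_update, spin_update]
      by_cases hv : v = x
      · subst hv; simp; ring
      · simp only [if_neg hv]; ring
    rw [Finset.sum_sub_distrib] at this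
    rw [Finset.sum_ite_eq' Λ x (fun _ => 2*h), if_pos hx] at this
    linarith
  have hP : (∑ v ∈ Λ, ∑ w ∈ Λ, if adj v w then spin ρ₁ v * spin ρ₁ w else 0)
      ≤ (∑ v ∈ Λ, ∑ w ∈ Λ, if adj v w then spin ρ₀ v * spin ρ₀ w else 0) + 32 := by
    have hpt : ∀ v ∈ Λ, ∀ w ∈ Λ,
        (if adj v w then spin ρ₁ v * spin ρ₁ w else 0)
          - (if adj v w then spin ρ₀ v * spin ρ₀ w else 0)
        ≤ (if v = x then (if adj v w then (2:ℝ) else 0) else 0)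
          + (if w = x then (if adj v w then (2:ℝ) else 0) else 0) := by
      intro v _ w _
      by_cases hadj : adj v w
      · simp only [if_pos hadj]
        by_cases hvx : v = x
        · by_cases hwx : w = x
          · subst hvx; subst hwx; exact absurd hadj (adj_irrefl _)
          · simp only [if_pos hvx, if_neg hwx]
            have h1 := spin_mul_le_one ρ₁ ρ₁ v w
            have h2 := neg_one_le_spin_mul ρ₀ ρ₀ v w
            linarith
        · by_cases hwx : w = x
          · simp only [if_neg hvx, if_pos hwx]
            have h1 := spin_mul_le_one ρ₁ ρ₁ v w
            have h2 := neg_one_le_spin_mul ρ₀ ρ₀ v w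
            linarith
          · simp only [if_neg hvx, if_neg hwx]
            have e1 : spin ρ₁ v = spin ρ₀ v := by
              rw [hρ₁, hρ₀, spin_update, spin_update, if_neg hvx, if_neg hvx]
            have e2 : spin ρ₁ w = spin ρ₀ w := by
              rw [hρ₁, hρ₀, spin_update, spin_update, if_neg hwx, if_neg hwx]
            rw [e1, e2]
            norm_num
      · simp [if_neg hadj]
    have hsum : (∑ v ∈ Λ, ∑ w ∈ Λ, ((if adj v w then spin ρ₁ v * spin ρ₁ w else 0)
        - (if adj v w then spin ρ₀ v * spin ρ₀ w else 0)))
        ≤ ∑ v ∈ Λ, ∑ w ∈ Λ, ((if v = x then (if adj v w then (2:ℝ) else 0) else 0)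
          + (if w = x then (if adj v w then (2:ℝ) else 0) else 0)) := by
      refine Finset.sum_le_sum fun v hv => Finset.sum_le_sum fun w hw => hpt v hv w hw
    have hbound : (∑ v ∈ Λ, ∑ w ∈ Λ, ((if v = x then (if adj v w then (2:ℝ) else 0) else 0)
          + (if w = x then (if adj v w then (2:ℝ) else 0) else 0))) ≤ 32 := by
      have e3 : ∀ v ∈ Λ, (∑ w ∈ Λ, ((if v = x then (if adj v w then (2:ℝ) else 0) else 0)
          + (if w = x then (if adj v w then (2:ℝ) else 0) else 0)))
          = (if v = x then (∑ w ∈ Λ, if adj v w then (2:ℝ) else 0) else 0)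
            + (if adj v x then (2:ℝ) else 0) := by
        intro v _
        rw [Finset.sum_add_distrib]
        congr 1
        · split
          · rfl
          · exact Finset.sum_const_zero
        · rw [Finset.sum_ite_eq' Λ x (fun w => if adj v w then (2:ℝ) else 0), if_pos hx]
      rw [Finset.sum_congr rfl e3, Finset.sum_add_distrib]
      have h4 : (∑ v ∈ Λ, if v = x then (∑ w ∈ Λ, if adj v w then (2:ℝ) else 0) else 0) ≤ 16 := by
        rw [Finset.sum_ite_eq' Λ x (fun v => ∑ w ∈ Λ, if adj v w then (2:ℝ) else 0), if_pos hx]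
        exact adj_count_le Λ x
      have h5 := adj_count_le' Λ x
      linarith
    rw [Finset.sum_congr rfl (fun v _ => Finset.sum_sub_distrib _ _), Finset.sum_sub_distrib] at hsum
    linarith
  nlinarith [mul_le_mul_of_nonneg_left hP hβ0]

-- ### weight lemmas

lemma weight_pos (Λ : Finset V) (β : ℝ) (η : V → ℤ) (J : V → ℝ) (ρ : Config) :
    0 < weight Λ β η J ρ := Real.exp_pos _

lemma weight_logsupermod (Λ : Finset V) {β : ℝ} (hβ0 : 0 ≤ β) (h : ℝ) (σ τ : ↥Λ → Bool) :
    weight Λ β (fun _ => 0) (fun _ => h) (extend Λ σ)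
        * weight Λ β (fun _ => 0) (fun _ => h) (extend Λ τ)
      ≤ weight Λ β (fun _ => 0) (fun _ => h) (extend Λ (σ ⊓ τ))
        * weight Λ β (fun _ => 0) (fun _ => h) (extend Λ (σ ⊔ τ)) := by
  unfold weight
  rw [← Real.exp_add, ← Real.exp_add]
  exact Real.exp_le_exp.2 (energy_supermod Λ hβ0 _ σ τ)

lemma weight_flip (Λ : Finset V) {β : ℝ} (hβ0 : 0 ≤ β) (h : ℝ) (x : ↥Λ) (σ : ↥Λ → Bool) :
    weight Λ β (fun _ => 0) (fun _ => h) (extend Λ (Function.update σ x true))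
      ≤ Real.exp (2*h + 16*β)
        * weight Λ β (fun _ => 0) (fun _ => h) (extend Λ (Function.update σ x false)) := by
  rw [extend_update, extend_update]
  unfold weight
  rw [← Real.exp_add]
  exact Real.exp_le_exp.2 (by linarith [energy_flip_le Λ hβ0 h x.2 (extend Λ σ)])



-- ### abbreviations for the derivative computation

noncomputable def wt (Λ : Finset V) (β h : ℝ) (σ : ↥Λ → Bool) : ℝ :=
  weight Λ β (fun _ => 0) (fun _ => h) (extend Λ σ)

noncomputable def mg (Λ : Finset V) (σ : ↥Λ → Bool) : ℝ := ∑ x ∈ Λ, spin (extend Λ σ) x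

def Bev (Λ : Finset V) (A : Set Config) (ω : ↥(lamOne Λ) → Bool) : Set Config :=
  occursOn A (slab 0 ∪ openSet (lamOne Λ) ω)

noncomputable def indB (Λ : Finset V) (B : Set Config) (σ : ↥Λ → Bool) : ℝ :=
  if extend Λ σ ∈ B then 1 else 0

noncomputable def nm (Λ : Finset V) (β h : ℝ) (B : Set Config) : ℝ :=
  ∑ σ : ↥Λ → Bool, wt Λ β h σ * indB Λ B σ

noncomputable def nm' (Λ : Finset V) (β h : ℝ) (B : Set Config) : ℝ :=
  ∑ σ : ↥Λ → Bool, (wt Λ β h σ * mg Λ σ) * indB Λ B σ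

noncomputable def zz (Λ : Finset V) (β h : ℝ) : ℝ := ∑ σ : ↥Λ → Bool, wt Λ β h σ

noncomputable def zz' (Λ : Finset V) (β h : ℝ) : ℝ := ∑ σ : ↥Λ → Bool, wt Λ β h σ * mg Λ σ

lemma wt_pos (Λ : Finset V) (β h : ℝ) (σ : ↥Λ → Bool) : 0 < wt Λ β h σ := Real.exp_pos _

lemma zz_pos (Λ : Finset V) (β h : ℝ) : 0 < zz Λ β h :=
  Finset.sum_pos (fun σ _ => wt_pos Λ β h σ) Finset.univ_nonempty

lemma prob_eq (Λ : Finset V) (β h : ℝ) (B : Set Config) :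
    prob Λ β (fun _ => 0) (fun _ => h) B = nm Λ β h B / zz Λ β h := by
  unfold prob nm zz wt indB Zpart
  congr 1
  refine Finset.sum_congr rfl fun σ _ => ?_
  split <;> simp

lemma hasDerivAt_wt (Λ : Finset V) (β h : ℝ) (σ : ↥Λ → Bool) :
    HasDerivAt (fun t => wt Λ β t σ) (wt Λ β h σ * mg Λ σ) h := by
  have h1 : (fun t => wt Λ β t σ)
      = fun t => Real.exp (energy Λ β (fun _ => 0) (fun _ => (0:ℝ)) (extend Λ σ)
          + t * mg Λ σ) := by
    funext t; unfold wt weight mg; rw [energy_const_field]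
  rw [h1, congrFun h1 h]
  exact (((hasDerivAt_mul_const (mg Λ σ)).const_add
    (energy Λ β (fun _ => 0) (fun _ => (0:ℝ)) (extend Λ σ)))).exp

lemma hasDerivAt_zz (Λ : Finset V) (β h : ℝ) :
    HasDerivAt (fun t => zz Λ β t) (zz' Λ β h) h := by
  unfold zz zz'
  exact HasDerivAt.fun_sum fun σ _ => hasDerivAt_wt Λ β h σ

lemma hasDerivAt_nm (Λ : Finset V) (β h : ℝ) (B : Set Config) :
    HasDerivAt (fun t => nm Λ β t B) (nm' Λ β h B) h := by
  unfold nm nm'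
  exact HasDerivAt.fun_sum fun σ _ => (hasDerivAt_wt Λ β h σ).mul_const (indB Λ B σ)

lemma hasDerivAt_prob (Λ : Finset V) (β h : ℝ) (B : Set Config) :
    HasDerivAt (fun t => prob Λ β (fun _ => 0) (fun _ => t) B)
      ((nm' Λ β h B * zz Λ β h - nm Λ β h B * zz' Λ β h) / (zz Λ β h)^2) h := by
  have h3 : (fun t => prob Λ β (fun _ => 0) (fun _ => t) B)
      = fun t => nm Λ β t B / zz Λ β t := funext fun t => prob_eq Λ β t B
  rw [h3]
  exact (hasDerivAt_nm Λ β h B).div (hasDerivAt_zz Λ β h) (zz_pos Λ β h).ne'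

lemma hasDerivAt_mu_h (Λ : Finset V) (β p h : ℝ) (A : Set Config) :
    HasDerivAt (fun t => mu Λ β p t A)
      (∑ ω : ↥(lamOne Λ) → Bool, bern p (lamOne Λ) ω *
        ((nm' Λ β h (Bev Λ A ω) * zz Λ β h - nm Λ β h (Bev Λ A ω) * zz' Λ β h)
          / (zz Λ β h)^2)) h := by
  have h0 : (fun t => mu Λ β p t A)
      = fun t => ∑ ω : ↥(lamOne Λ) → Bool,
          bern p (lamOne Λ) ω * prob Λ β (fun _ => 0) (fun _ => t) (Bev Λ A ω) := rfl
  rw [h0]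
  exact HasDerivAt.fun_sum fun ω _ => (hasDerivAt_prob Λ β h (Bev Λ A ω)).const_mul _

lemma hasDerivAt_bern (Λ : Finset V) (p : ℝ) (ω : ↥(lamOne Λ) → Bool) :
    HasDerivAt (fun t => bern t (lamOne Λ) ω)
      (∑ y : ↥(lamOne Λ), (∏ z ∈ Finset.univ.erase y, (if ω z then p else 1-p))
        * (if ω y then (1:ℝ) else -1)) p := by
  have h1 := HasDerivAt.fun_finset_prod (u := (Finset.univ : Finset ↥(lamOne Λ)))
    (f := fun y t => if ω y then t else 1 - t)
    (f' := fun y => if ω y then (1:ℝ) else -1) (x := p) ?_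
  · have h2 : (fun t => bern t (lamOne Λ) ω)
        = (∏ i ∈ (Finset.univ : Finset ↥(lamOne Λ)), (fun y t => if ω y then t else 1 - t) i ·) := by
      funext t
      simp only [bern]
    rw [h2]
    convert h1 using 1
    · rfl
    · rfl
    · simp only [smul_eq_mul]
  · intro i _
    by_cases hi : ω i
    · simp only [hi, if_true]
      exact hasDerivAt_id p
    · simp only [hi, if_false]
      exact (hasDerivAt_id p).const_sub 1

lemma hasDerivAt_mu_p (Λ : Finset V) (β h p : ℝ) (A : Set Config) :
    HasDerivAt (fun t => mu Λ β t h A)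
      (∑ ω : ↥(lamOne Λ) → Bool,
        (∑ y : ↥(lamOne Λ), (∏ z ∈ Finset.univ.erase y, (if ω z then p else 1-p))
          * (if ω y then (1:ℝ) else -1))
        * prob Λ β (fun _ => 0) (fun _ => h) (Bev Λ A ω)) p := by
  have h0 : (fun t => mu Λ β t h A)
      = fun t => ∑ ω : ↥(lamOne Λ) → Bool,
          bern t (lamOne Λ) ω * prob Λ β (fun _ => 0) (fun _ => h) (Bev Λ A ω) := rfl
  rw [h0]
  exact HasDerivAt.fun_sum fun ω _ => (hasDerivAt_bern Λ p ω).mul_const _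



-- ### more supporting lemmas

lemma bern_nonneg {p : ℝ} (hp0 : 0 ≤ p) (hp1 : p ≤ 1) (Δ : Finset V) (ω : ↥Δ → Bool) :
    0 ≤ bern p Δ ω :=
  Finset.prod_nonneg fun y _ => by split
                                   · exact hp0
                                   · linarith

lemma indB_nonneg (Λ : Finset V) (B : Set Config) (σ : ↥Λ → Bool) : 0 ≤ indB Λ B σ := by
  unfold indB; split <;> norm_num

lemma indB_mono {Λ : Finset V} {A : Set Config} (hA : Increasing A) (Δ : Set V) :
    Monotone (indB Λ (occursOn A Δ)) := by
  intro σ τ hle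
  unfold indB
  by_cases hσ : extend Λ σ ∈ occursOn A Δ
  · have hτ : extend Λ τ ∈ occursOn A Δ :=
      occursOn_increasing hA Δ _ _ hσ (fun v => extend_mono hle v)
    simp [hσ, hτ]
  · simp only [if_neg hσ]
    split <;> norm_num

lemma extend_coe (Λ : Finset V) (σ : ↥Λ → Bool) (v : ↥Λ) : extend Λ σ ↑v = σ v := by
  simp [extend]

lemma mg_eq (Λ : Finset V) (σ : ↥Λ → Bool) : mg Λ σ = ∑ v ∈ Λ.attach, cSx v σ := by
  unfold mg
  rw [← Finset.sum_attach Λ (fun v => spin (extend Λ σ) v)]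
  refine Finset.sum_congr rfl fun v _ => ?_
  unfold cSx
  rw [spin_eq, extend_coe]

lemma decomp (Λ : Finset V) (β h : ℝ) (B : Set Config) :
    nm' Λ β h B * zz Λ β h - nm Λ β h B * zz' Λ β h
      = ∑ v ∈ Λ.attach,
          ((∑ σ : ↥Λ → Bool, wt Λ β h σ * (indB Λ B σ * cSx v σ)) * zz Λ β h
            - nm Λ β h B * (∑ σ : ↥Λ → Bool, wt Λ β h σ * cSx v σ)) := by
  have e0 : ∀ σ : ↥Λ → Bool, (wt Λ β h σ * mg Λ σ) * indB Λ B σ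
      = ∑ v ∈ Λ.attach, wt Λ β h σ * (indB Λ B σ * cSx v σ) := by
    intro σ
    rw [mg_eq, Finset.mul_sum, Finset.sum_mul]
    exact Finset.sum_congr rfl fun v _ => by ring
  have e0' : ∀ σ : ↥Λ → Bool, wt Λ β h σ * mg Λ σ
      = ∑ v ∈ Λ.attach, wt Λ β h σ * cSx v σ := by
    intro σ
    rw [mg_eq, Finset.mul_sum]
  have e1 : nm' Λ β h B
      = ∑ v ∈ Λ.attach, ∑ σ : ↥Λ → Bool, wt Λ β h σ * (indB Λ B σ * cSx v σ) := by
    unfold nm'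
    rw [Finset.sum_congr rfl (fun σ _ => e0 σ), Finset.sum_comm]
  have e2 : zz' Λ β h = ∑ v ∈ Λ.attach, ∑ σ : ↥Λ → Bool, wt Λ β h σ * cSx v σ := by
    unfold zz'
    rw [Finset.sum_congr rfl (fun σ _ => e0' σ), Finset.sum_comm]
  rw [e1, e2, Finset.sum_mul, Finset.mul_sum, ← Finset.sum_sub_distrib]

lemma lamOne_subset (Λ : Finset V) : lamOne Λ ⊆ Λ := Finset.filter_subset _ _

lemma not_mem_slab0 {Λ : Finset V} (y : ↥(lamOne Λ)) : (y : V) ∉ slab 0 := by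
  have h1 : (y : V).2.2 = 1 := by
    have h2 := y.2
    unfold lamOne at h2
    exact (Finset.mem_filter.1 h2).2
  rintro ⟨-, h2⟩
  rw [h1] at h2
  norm_num at h2

lemma not_mem_openSet_update {Λ : Finset V} (ω : ↥(lamOne Λ) → Bool) (y : ↥(lamOne Λ)) :
    (y : V) ∉ openSet (lamOne Λ) (Function.update ω y false) := by
  rintro ⟨hv, hval⟩
  have h1 : (⟨(y : V), hv⟩ : ↥(lamOne Λ)) = y := Subtype.ext rfl
  rw [h1, Function.update_self] at hval
  cases hval

lemma union_openSet_update {Λ : Finset V} (ω : ↥(lamOne Λ) → Bool) (y : ↥(lamOne Λ))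
    (hωy : ω y = true) :
    (slab 0 ∪ openSet (lamOne Λ) (Function.update ω y false)) ∪ {(y : V)}
      = slab 0 ∪ openSet (lamOne Λ) ω := by
  ext u
  simp only [Set.mem_union, Set.mem_singleton_iff]
  constructor
  · rintro ((hs | ho) | rfl)
    · exact Or.inl hs
    · obtain ⟨hu, hval⟩ := ho
      by_cases hc : (⟨u, hu⟩ : ↥(lamOne Λ)) = y
      · rw [hc, Function.update_self] at hval; cases hval
      · rw [Function.update_of_ne hc] at hval
        exact Or.inr ⟨hu, hval⟩
    · refine Or.inr ⟨y.2, ?_⟩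
      have h1 : (⟨(y : V), y.2⟩ : ↥(lamOne Λ)) = y := Subtype.ext rfl
      rw [h1]; exact hωy
  · rintro (hs | ⟨hu, hval⟩)
    · exact Or.inl (Or.inl hs)
    · by_cases hc : (⟨u, hu⟩ : ↥(lamOne Λ)) = y
      · exact Or.inr (congrArg Subtype.val hc)
      · exact Or.inl (Or.inr ⟨hu, by rw [Function.update_of_ne hc]; exact hval⟩)

lemma indB_update_eq {Λ : Finset V} {A : Set Config} (hA : Increasing A)
    (ω : ↥(lamOne Λ) → Bool) (y : ↥(lamOne Λ)) (hωy : ω y = true) (σ : ↥Λ → Bool) :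
    indB Λ (Bev Λ A ω) (Function.update σ (⟨(y : V), lamOne_subset Λ y.2⟩ : ↥Λ) false)
      = indB Λ (Bev Λ A (Function.update ω y false)) σ := by
  unfold indB Bev
  rw [extend_update]
  have hx : (y : V) ∉ slab 0 ∪ openSet (lamOne Λ) (Function.update ω y false) := by
    rintro (hc | hc)
    · exact not_mem_slab0 y hc
    · exact not_mem_openSet_update ω y hc
  have hkey := key_event hA hx (extend Λ σ)
  rw [union_openSet_update ω y hωy] at hkey
  simp only [hkey]

-- involution reindexing
lemma gen_flip_reindex {ι : Type*} [Fintype ι] [DecidableEq ι] (y : ι)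
    (f g : (ι → Bool) → ℝ)
    (hfg : ∀ σ, f σ = g (Function.update σ y (!(σ y)))) : (∑ σ, f σ) = ∑ σ, g σ := by
  have hT : Function.Involutive (fun σ : ι → Bool => Function.update σ y (!(σ y))) := by
    intro σ
    funext i
    by_cases hi : i = y
    · subst hi; simp
    · simp [Function.update_of_ne hi]
  exact Fintype.sum_bijective _ hT.bijective f g hfg

lemma erase_prod_update {Λ : Finset V} (p : ℝ) (ω : ↥(lamOne Λ) → Bool) (y : ↥(lamOne Λ))
    (b : Bool) :
    (∏ z ∈ Finset.univ.erase y, (if (Function.update ω y b) z then p else 1-p))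
      = ∏ z ∈ Finset.univ.erase y, (if ω z then p else 1-p) := by
  refine Finset.prod_congr rfl fun z hz => ?_
  rw [Function.update_of_ne (Finset.mem_erase.1 hz).1]

lemma reorg (Λ : Finset V) (p : ℝ) (cc : (↥(lamOne Λ) → Bool) → ℝ) :
    (∑ ω : ↥(lamOne Λ) → Bool,
      (∑ y : ↥(lamOne Λ), (∏ z ∈ Finset.univ.erase y, (if ω z then p else 1-p))
        * (if ω y then (1:ℝ) else -1)) * cc ω)
    = ∑ y : ↥(lamOne Λ), ∑ ω : ↥(lamOne Λ) → Bool,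
        cIx y ω * ((∏ z ∈ Finset.univ.erase y, (if ω z then p else 1-p))
          * (cc ω - cc (Function.update ω y false))) := by
  have step1 : (∑ ω : ↥(lamOne Λ) → Bool,
      (∑ y : ↥(lamOne Λ), (∏ z ∈ Finset.univ.erase y, (if ω z then p else 1-p))
        * (if ω y then (1:ℝ) else -1)) * cc ω)
      = ∑ y : ↥(lamOne Λ), ∑ ω : ↥(lamOne Λ) → Bool,
          ((∏ z ∈ Finset.univ.erase y, (if ω z then p else 1-p))
            * (if ω y then (1:ℝ) else -1)) * cc ω := by
    rw [Finset.sum_congr rfl fun ω _ => Finset.sum_mul _ _ (cc ω), Finset.sum_comm]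
  rw [step1]
  refine Finset.sum_congr rfl fun y _ => ?_
  have step2 : ∀ ω : ↥(lamOne Λ) → Bool,
      ((∏ z ∈ Finset.univ.erase y, (if ω z then p else 1-p))
        * (if ω y then (1:ℝ) else -1)) * cc ω
      = cIx y ω * ((∏ z ∈ Finset.univ.erase y, (if ω z then p else 1-p)) * cc ω)
        - (1 - cIx y ω) * ((∏ z ∈ Finset.univ.erase y, (if ω z then p else 1-p)) * cc ω) := by
    intro ω
    cases hωy : ω y <;> simp [cIx, hωy] <;> ring
  rw [Finset.sum_congr rfl fun ω _ => step2 ω, Finset.sum_sub_distrib]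
  have step3 : (∑ ω : ↥(lamOne Λ) → Bool,
      (1 - cIx y ω) * ((∏ z ∈ Finset.univ.erase y, (if ω z then p else 1-p)) * cc ω))
      = ∑ ω : ↥(lamOne Λ) → Bool,
          cIx y ω * ((∏ z ∈ Finset.univ.erase y, (if ω z then p else 1-p))
            * cc (Function.update ω y false)) := by
    refine (gen_flip_reindex y _ _ ?_).symm
    intro ω
    cases hωy : ω y
    · simp only [Bool.not_false]
      have h1 : cIx y ω = 0 := by simp [cIx, hωy]
      have h2 : cIx y (Function.update ω y true) = 1 := by simp [cIx]
      rw [h1, h2]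
      simp
    · simp only [Bool.not_true]
      have h1 : cIx y ω = 1 := by simp [cIx, hωy]
      have h2 : cIx y (Function.update ω y false) = 0 := by simp [cIx]
      rw [h1, h2, erase_prod_update]
      ring
  rw [step3, ← Finset.sum_sub_distrib]
  refine Finset.sum_congr rfl fun ω _ => by ring



lemma core_inst (Λ : Finset V) {β : ℝ} (hβ0 : 0 ≤ β) {A : Set Config} (hA : Increasing A)
    (h : ℝ) (ω : ↥(lamOne Λ) → Bool) (y : ↥(lamOne Λ)) (hωy : ω y = true) :
    2 * (nm Λ β h (Bev Λ A ω) - nm Λ β h (Bev Λ A (Function.update ω y false))) * zz Λ β h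
      ≤ (1 + Real.exp (2*h + 16*β)) *
        ((∑ σ : ↥Λ → Bool, wt Λ β h σ * (indB Λ (Bev Λ A ω) σ
            * cSx (⟨(y : V), lamOne_subset Λ y.2⟩ : ↥Λ) σ)) * zz Λ β h
          - nm Λ β h (Bev Λ A ω) * (∑ σ : ↥Λ → Bool, wt Λ β h σ
              * cSx (⟨(y : V), lamOne_subset Λ y.2⟩ : ↥Λ) σ)) := by
  have hnm : nm Λ β h (Bev Λ A ω)
      = ∑ σ : ↥Λ → Bool, wt Λ β h σ * indB Λ (Bev Λ A ω) σ := rfl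
  have hzz : zz Λ β h = ∑ σ : ↥Λ → Bool, wt Λ β h σ := rfl
  have hcore := gen_core (wt Λ β h) (indB Λ (Bev Λ A ω))
      (⟨(y : V), lamOne_subset Λ y.2⟩ : ↥Λ) (Real.exp (2*h + 16*β)) (Real.exp_pos _).le
      (fun σ => (wt_pos Λ β h σ).le)
      (fun σ τ => weight_logsupermod Λ hβ0 h σ τ)
      (fun σ => indB_nonneg Λ _ σ)
      (by unfold Bev; exact indB_mono hA _)
      (fun σ => weight_flip Λ hβ0 h _ σ)
  have hsub : (∑ σ : ↥Λ → Bool, wt Λ β h σ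
      * indB Λ (Bev Λ A ω) (Function.update σ (⟨(y : V), lamOne_subset Λ y.2⟩ : ↥Λ) false))
      = nm Λ β h (Bev Λ A (Function.update ω y false)) := by
    rw [show nm Λ β h (Bev Λ A (Function.update ω y false))
      = ∑ σ : ↥Λ → Bool, wt Λ β h σ * indB Λ (Bev Λ A (Function.update ω y false)) σ from rfl]
    exact Finset.sum_congr rfl fun σ _ => by rw [indB_update_eq hA ω y hωy σ]
  rw [hsub] at hcore
  rw [hnm, hzz]
  exact hcore

set_option maxHeartbeats 2000000 in
lemma main_ineq (Λ : Finset V) {β : ℝ} (hβ0 : 0 ≤ β) (A : Set Config) (hA : Increasing A)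
    {p : ℝ} (hp0 : 0 < p) (hp1 : p < 1) (h : ℝ) :
    2 * p / (1 + Real.exp (2*h + 16*β)) *
      (∑ ω : ↥(lamOne Λ) → Bool,
        (∑ y : ↥(lamOne Λ), (∏ z ∈ Finset.univ.erase y, (if ω z then p else 1-p))
          * (if ω y then (1:ℝ) else -1))
          * prob Λ β (fun _ => 0) (fun _ => h) (Bev Λ A ω))
    ≤ ∑ ω : ↥(lamOne Λ) → Bool, bern p (lamOne Λ) ω *
        ((nm' Λ β h (Bev Λ A ω) * zz Λ β h - nm Λ β h (Bev Λ A ω) * zz' Λ β h)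
          / (zz Λ β h)^2) := by
  have hR0 : (0:ℝ) < Real.exp (2*h + 16*β) := Real.exp_pos _
  have hR1 : (0:ℝ) < 1 + Real.exp (2*h + 16*β) := by linarith
  have hZ : 0 < zz Λ β h := zz_pos Λ β h
  have hbern : ∀ ω : ↥(lamOne Λ) → Bool, 0 ≤ bern p (lamOne Λ) ω :=
    fun ω => bern_nonneg hp0.le hp1.le (lamOne Λ) ω
  -- the indicator-free covariance terms
  set CT : (↥(lamOne Λ) → Bool) → ↥Λ → ℝ := fun ω v =>
    ((∑ σ : ↥Λ → Bool, wt Λ β h σ * (indB Λ (Bev Λ A ω) σ * cSx v σ)) * zz Λ β h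
      - nm Λ β h (Bev Λ A ω) * (∑ σ : ↥Λ → Bool, wt Λ β h σ * cSx v σ)) with hCTdef
  have hCTpos : ∀ ω v, 0 ≤ CT ω v := by
    intro ω v
    exact gen_covpos (wt Λ β h) (indB Λ (Bev Λ A ω)) v (fun σ => (wt_pos Λ β h σ).le)
      (fun σ τ => weight_logsupermod Λ hβ0 h σ τ) (fun σ => indB_nonneg Λ _ σ)
      (by unfold Bev; exact indB_mono hA _)
  -- rewrite LHS using the reorganization lemma
  rw [reorg Λ p (fun ω => prob Λ β (fun _ => 0) (fun _ => h) (Bev Λ A ω)), Finset.mul_sum]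
  beta_reduce
  -- rewrite RHS by decomposing over sites
  have hRHS : ∀ ω : ↥(lamOne Λ) → Bool, bern p (lamOne Λ) ω *
      ((nm' Λ β h (Bev Λ A ω) * zz Λ β h - nm Λ β h (Bev Λ A ω) * zz' Λ β h)
        / (zz Λ β h)^2)
      = ∑ v ∈ Λ.attach, bern p (lamOne Λ) ω * (CT ω v / (zz Λ β h)^2) := by
    intro ω
    rw [decomp Λ β h (Bev Λ A ω), Finset.sum_div, Finset.mul_sum]
  rw [Finset.sum_congr rfl fun ω _ => hRHS ω, Finset.sum_comm]
  -- embedding of lamOne Λ into Λ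
  set emb : ↥(lamOne Λ) → ↥Λ := fun y => ⟨(y : V), lamOne_subset Λ y.2⟩ with hembdef
  have hembinj : Function.Injective emb := by
    intro a b hab
    have h2 : (emb a).1 = (emb b).1 := by rw [hab]
    exact Subtype.ext h2
  -- main termwise estimate
  have hterm : ∀ y : ↥(lamOne Λ),
      (2 * p / (1 + Real.exp (2*h + 16*β)) *
        ∑ ω : ↥(lamOne Λ) → Bool, cIx y ω *
          ((∏ z ∈ Finset.univ.erase y, (if ω z then p else 1-p)) *
            (prob Λ β (fun _ => 0) (fun _ => h) (Bev Λ A ω)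
              - prob Λ β (fun _ => 0) (fun _ => h) (Bev Λ A (Function.update ω y false)))))
      ≤ ∑ ω : ↥(lamOne Λ) → Bool, bern p (lamOne Λ) ω * (CT ω (emb y) / (zz Λ β h)^2) := by
    intro y
    rw [Finset.mul_sum]
    refine Finset.sum_le_sum fun ω _ => ?_
    cases hωy : ω y
    · have h1 : cIx y ω = 0 := by simp [cIx, hωy]
      rw [h1, zero_mul, mul_zero]
      exact mul_nonneg (hbern ω) (div_nonneg (hCTpos ω (emb y)) (pow_pos hZ 2).le)
    · have h1 : cIx y ω = 1 := by simp [cIx, hωy]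
      rw [h1, one_mul]
      have hb : bern p (lamOne Λ) ω
          = p * ∏ z ∈ Finset.univ.erase y, (if ω z then p else 1-p) := by
        have := Finset.mul_prod_erase Finset.univ
          (fun z => if ω z then p else 1-p) (Finset.mem_univ y)
        rw [show bern p (lamOne Λ) ω
          = ∏ z : ↥(lamOne Λ), (if ω z then p else 1-p) from rfl, ← this]
        simp [hωy]
      -- core estimate
      have hcore := core_inst Λ hβ0 hA h ω y hωy
      have hccω : prob Λ β (fun _ => 0) (fun _ => h) (Bev Λ A ω)
          = nm Λ β h (Bev Λ A ω) / zz Λ β h := prob_eq Λ β h _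
      have hccω' : prob Λ β (fun _ => 0) (fun _ => h) (Bev Λ A (Function.update ω y false))
          = nm Λ β h (Bev Λ A (Function.update ω y false)) / zz Λ β h := prob_eq Λ β h _
      rw [hccω, hccω', hb]
      have hCTe : CT ω (emb y)
          = ((∑ σ : ↥Λ → Bool, wt Λ β h σ * (indB Λ (Bev Λ A ω) σ
            * cSx (⟨(y : V), lamOne_subset Λ y.2⟩ : ↥Λ) σ)) * zz Λ β h
          - nm Λ β h (Bev Λ A ω) * (∑ σ : ↥Λ → Bool, wt Λ β h σ
              * cSx (⟨(y : V), lamOne_subset Λ y.2⟩ : ↥Λ) σ)) := rfl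
      rw [hCTe] at *
      set N1 := nm Λ β h (Bev Λ A ω) with hN1
      set N0 := nm Λ β h (Bev Λ A (Function.update ω y false)) with hN0
      set Z := zz Λ β h with hZdef
      set C := ((∑ σ : ↥Λ → Bool, wt Λ β h σ * (indB Λ (Bev Λ A ω) σ
            * cSx (⟨(y : V), lamOne_subset Λ y.2⟩ : ↥Λ) σ)) * Z
          - N1 * (∑ σ : ↥Λ → Bool, wt Λ β h σ
              * cSx (⟨(y : V), lamOne_subset Λ y.2⟩ : ↥Λ) σ)) with hC
      -- goal : 2*p/(1+R) * (p * π * (N1/Z - N0/Z)) ≤ (p*π) * (C / Z^2)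
      have hπ0 : 0 ≤ ∏ z ∈ Finset.univ.erase y, (if ω z then p else 1-p) :=
        Finset.prod_nonneg fun z _ => by split
                                         · exact hp0.le
                                         · linarith
      set π := ∏ z ∈ Finset.univ.erase y, (if ω z then p else 1-p) with hπ
      have hkey : 2 * (N1/Z - N0/Z) / (1 + Real.exp (2*h + 16*β)) ≤ C / Z^2 := by
        have hZ' : Z ≠ 0 := hZ.ne'
        have hR' : (1 + Real.exp (2*h + 16*β)) ≠ 0 := hR1.ne'
        have e : 2 * (N1/Z - N0/Z) / (1 + Real.exp (2*h + 16*β))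
            = (2*(N1-N0)) / (Z*(1 + Real.exp (2*h + 16*β))) := by
          rw [div_sub_div_same, ← mul_div_assoc, div_div]
        rw [e, div_le_div_iff₀ (by positivity) (by positivity)]
        nlinarith [mul_le_mul_of_nonneg_right hcore hZ.le, sq_nonneg Z]
      calc 2 * p / (1 + Real.exp (2*h + 16*β)) * (π * (N1/Z - N0/Z))
          = (p * π) * (2 * (N1/Z - N0/Z) / (1 + Real.exp (2*h + 16*β))) := by ring
        _ ≤ (p * π) * (C / Z^2) := by
            refine mul_le_mul_of_nonneg_left hkey ?_
            positivity
  show (∑ y : ↥(lamOne Λ), 2 * p / (1 + Real.exp (2*h + 16*β)) *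
        ∑ ω : ↥(lamOne Λ) → Bool, cIx y ω *
          ((∏ z ∈ Finset.univ.erase y, (if ω z then p else 1-p)) *
            (prob Λ β (fun _ => 0) (fun _ => h) (Bev Λ A ω)
              - prob Λ β (fun _ => 0) (fun _ => h) (Bev Λ A (Function.update ω y false)))))
      ≤ ∑ v ∈ Λ.attach, ∑ ω : ↥(lamOne Λ) → Bool,
          bern p (lamOne Λ) ω * (CT ω v / (zz Λ β h)^2)
  refine le_trans (Finset.sum_le_sum fun y _ => hterm y) ?_
  have himg : (∑ y : ↥(lamOne Λ), ∑ ω : ↥(lamOne Λ) → Bool,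
        bern p (lamOne Λ) ω * (CT ω (emb y) / (zz Λ β h)^2))
      = ∑ v ∈ Finset.univ.image emb, ∑ ω : ↥(lamOne Λ) → Bool,
          bern p (lamOne Λ) ω * (CT ω v / (zz Λ β h)^2) :=
    (Finset.sum_image (f := fun v => ∑ ω : ↥(lamOne Λ) → Bool,
        bern p (lamOne Λ) ω * (CT ω v / (zz Λ β h)^2)) (g := emb) (s := Finset.univ)
      (fun a _ b _ hab => hembinj hab)).symm
  rw [himg]
  refine Finset.sum_le_sum_of_subset_of_nonneg ?_ ?_
  · rw [← Finset.univ_eq_attach]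
    exact Finset.subset_univ _
  · intro v _ _
    refine Finset.sum_nonneg fun ω _ => ?_
    exact mul_nonneg (hbern ω) (div_nonneg (hCTpos ω v) (pow_pos hZ 2).le)

theorem statement19 (β : ℝ) (hβ0 : 0 ≤ β) (hβc : expDecay β) :
    ∃ γ : ℝ × ℝ → ℝ, ContinuousOn γ (Set.Ioo (0 : ℝ) 1 ×ˢ (Set.univ : Set ℝ)) ∧
      (∀ q ∈ Set.Ioo (0 : ℝ) 1 ×ˢ (Set.univ : Set ℝ), 0 < γ q) ∧
      ∀ Λ : Finset V, ∀ A : Set Config, Increasing A → DependsOn A ↑Λ →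
        ∀ p ∈ Set.Ioo (0 : ℝ) 1, ∀ h : ℝ,
          γ (p, h) * deriv (fun p' => mu Λ β p' h A) p
            ≤ deriv (fun h' => mu Λ β p h' A) h := by
  refine ⟨fun q => 2 * q.1 / (1 + Real.exp (2 * q.2 + 16 * β)), ?_, ?_, ?_⟩
  · refine Continuous.continuousOn ?_
    refine Continuous.div ?_ ?_ ?_
    · exact continuous_const.mul continuous_fst
    · exact continuous_const.add
        (Real.continuous_exp.comp ((continuous_const.mul continuous_snd).add continuous_const))
    · intro q
      positivity
  · rintro ⟨p, h⟩ hq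
    have hp0 : (0:ℝ) < p := hq.1.1
    have h1 : (0:ℝ) < 1 + Real.exp (2*h + 16*β) := by positivity
    exact div_pos (by linarith) h1
  · intro Λ A hA _ p hp h
    rw [Set.mem_Ioo] at hp
    rw [(hasDerivAt_mu_p Λ β h p A).deriv, (hasDerivAt_mu_h Λ β p h A).deriv]
    exact main_ineq Λ hβ0 A hA hp.1 hp.2 h

end Ising
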